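/- A finite dimensional G-graded algebra A is graded symmetric if and only if there exists a linear map λ : A → k such that λ(xy) = λ(yx) for all x,y ∈ A, Ker(λ) contains no nonzero graded left ideal of A, and λ(x_σ y_τ) = 0 for all homogeneous x_σ ∈ A_σ, y_τ ∈ A_τ with στ ≠ e. -/

import Mathlib

/-- The degree-`g` component of the dual of a graded module:
`(M*)_g = { f | f(M_h) = 0 for all h ≠ g⁻¹ }`. -/
def dualComponent {k M : Type*} [Field k] [AddCommGroup M] [Module k M]
    {G : Type*} [Group G] (ℳ : G → Submodule k M) (g : G) :
    Submodule k (Module.Dual k M) where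
  carrier := {f | ∀ h : G, h ≠ g⁻¹ → ∀ x ∈ ℳ h, f x = 0}
  zero_mem' := by intro h hh x hx; rfl
  add_mem' := by
    intro f₁ f₂ h₁ h₂ h hh x hx
    simp [h₁ h hh x hx, h₂ h hh x hx]
  smul_mem' := by
    intro c f hf h hh x hx
    simp [hf h hh x hx]

/-- `A` is graded symmetric: `A ≅ A*` as graded `(A,A)`-bimodules, where the left
action on `A*` is `(a • f) y = f (y * a)`, the right action is `(f • a) y = f (a * y)`,
and `(A*)_g = { f | f(A_h) = 0 for h ≠ g⁻¹ }`. -/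
def IsGradedSymmetric {k A : Type*} [Field k] [Ring A] [Algebra k A]
    {G : Type*} [Group G] (𝒜 : G → Submodule k A) : Prop :=
  ∃ φ : A ≃ₗ[k] Module.Dual k A,
    (∀ a x y : A, φ (a * x) y = φ x (y * a)) ∧
    (∀ a x y : A, φ (x * a) y = φ x (a * y)) ∧
    ∀ g : G, ∀ x ∈ 𝒜 g, φ x ∈ dualComponent 𝒜 g

/-!
A bimodule map `φ : A → A*` is determined by `λ = φ 1` through `φ x y = λ (x * y)`, and
compatibility with the left action forces `λ` to be symmetric. Conversely, for a symmetric `λ`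
the map `x ↦ λ (x * ·)` is a bimodule map whose kernel is the largest left ideal inside `Ker λ`.
The degree condition on `λ` makes this map graded and its kernel a graded left ideal, so the map
is injective, hence bijective because `dim A = dim A*`.
-/

open DirectSum

theorem DirectSum.apply_eq_apply_decompose {ι M N σ F : Type*} [DecidableEq ι]
    [AddCommMonoid M] [AddCommMonoid N] [SetLike σ M] [AddSubmonoidClass σ M] (ℳ : ι → σ)
    [Decomposition ℳ] [FunLike F M N] [AddMonoidHomClass F M N]
    (f : F) {i : ι} (hf : ∀ j ≠ i, ∀ m ∈ ℳ j, f m = 0) (x : M) :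
    f x = f (decompose ℳ x i) := by
  classical
  conv_lhs => rw [← sum_support_decompose ℳ x]
  rw [map_sum]
  refine Finset.sum_eq_single i (fun j _ hj => hf j hj _ (decompose ℳ x j).2) fun hi => ?_
  rw [DFinsupp.notMem_support_iff.mp hi, ZeroMemClass.coe_zero, map_zero]

theorem Submodule.eq_iSup_inf_of_isHomogeneous {ι R M : Type*} [DecidableEq ι] [Semiring R]
    [AddCommMonoid M] [Module R M] {ℳ : ι → Submodule R M} [Decomposition ℳ]
    {p : Submodule R M} (hp : SetLike.IsHomogeneous ℳ p) : p = ⨆ i, p ⊓ ℳ i := by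
  classical
  refine le_antisymm (fun x hx => ?_) (iSup_le fun _ => inf_le_left)
  rw [← sum_support_decompose ℳ x]
  exact Submodule.sum_mem _ fun i _ =>
    Submodule.mem_iSup_of_mem i ⟨hp i hx, (decompose ℳ x i).2⟩

section FrobeniusPairing

variable {k A : Type*} [CommSemiring k] [Semiring A] [Algebra k A]

def frobeniusPairing (lam : A →ₗ[k] k) : A →ₗ[k] Module.Dual k A :=
  (LinearMap.mul k A).compr₂ lam

@[simp]
theorem frobeniusPairing_apply (lam : A →ₗ[k] k) (x y : A) :
    frobeniusPairing lam x y = lam (x * y) :=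
  rfl

theorem eq_frobeniusPairing {φ : A →ₗ[k] Module.Dual k A}
    (h : ∀ a x y : A, φ (x * a) y = φ x (a * y)) : φ = frobeniusPairing (φ 1) := by
  ext x y
  simpa using h x 1 y

variable {lam : A →ₗ[k] k}

theorem frobeniusPairing_mul_left (hcomm : ∀ x y : A, lam (x * y) = lam (y * x)) (a x y : A) :
    frobeniusPairing lam (a * x) y = frobeniusPairing lam x (y * a) := by
  simp only [frobeniusPairing_apply]
  rw [mul_assoc, hcomm, mul_assoc]

theorem frobeniusPairing_mul_right (a x y : A) :
    frobeniusPairing lam (x * a) y = frobeniusPairing lam x (a * y) := by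
  simp [mul_assoc]

theorem mul_mem_ker_frobeniusPairing (hcomm : ∀ x y : A, lam (x * y) = lam (y * x)) (a : A)
    {x : A} (hx : x ∈ LinearMap.ker (frobeniusPairing lam)) :
    a * x ∈ LinearMap.ker (frobeniusPairing lam) := by
  ext y
  rw [frobeniusPairing_mul_left hcomm, LinearMap.mem_ker.mp hx, LinearMap.zero_apply,
    LinearMap.zero_apply]

theorem ker_frobeniusPairing_le : LinearMap.ker (frobeniusPairing lam) ≤ LinearMap.ker lam :=
  fun x hx => by simpa using LinearMap.congr_fun hx 1

theorem le_ker_frobeniusPairing (hcomm : ∀ x y : A, lam (x * y) = lam (y * x))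
    {I : Submodule k A} (hI : ∀ a : A, ∀ x ∈ I, a * x ∈ I) (hIlam : I ≤ LinearMap.ker lam) :
    I ≤ LinearMap.ker (frobeniusPairing lam) := fun x hx => by
  ext y
  simpa [hcomm x y] using hIlam (hI y x hx)

end FrobeniusPairing

section Graded

variable {k A G : Type*} [Field k] [Ring A] [Algebra k A] [Group G]
  {𝒜 : G → Submodule k A} {lam : A →ₗ[k] k}
  (hdeg : ∀ σ τ : G, σ * τ ≠ 1 → ∀ x ∈ 𝒜 σ, ∀ y ∈ 𝒜 τ, lam (x * y) = 0)
include hdeg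

theorem frobeniusPairing_mem_dualComponent {g : G} {x : A} (hx : x ∈ 𝒜 g) :
    frobeniusPairing lam x ∈ dualComponent 𝒜 g :=
  fun h hh y hy => hdeg g h (fun e => hh (eq_inv_of_mul_eq_one_right e)) x hx y hy

variable [DecidableEq G] [Decomposition 𝒜]

theorem map_mul_eq_decompose_mul {τ : G} {y : A} (hy : y ∈ 𝒜 τ) (x : A) :
    lam (x * y) = lam (decompose 𝒜 x τ⁻¹ * y) :=
  apply_eq_apply_decompose 𝒜 (lam ∘ₗ LinearMap.mulRight k y)
    (fun g hg z hz => hdeg g τ (fun e => hg (eq_inv_of_mul_eq_one_left e)) z hz y hy) x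

theorem map_mul_eq_mul_decompose {σ : G} {x : A} (hx : x ∈ 𝒜 σ) (y : A) :
    lam (x * y) = lam (x * decompose 𝒜 y σ⁻¹) :=
  apply_eq_apply_decompose 𝒜 (lam ∘ₗ LinearMap.mulLeft k x)
    (fun g hg z hz => hdeg σ g (fun e => hg (eq_inv_of_mul_eq_one_right e)) x hx z hz) y

theorem isHomogeneous_ker_frobeniusPairing :
    SetLike.IsHomogeneous 𝒜 (LinearMap.ker (frobeniusPairing lam)) := fun g x hx => by
  ext y
  calc lam (decompose 𝒜 x g * y) = lam (decompose 𝒜 x g * decompose 𝒜 y g⁻¹) :=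
        map_mul_eq_mul_decompose hdeg (decompose 𝒜 x g).2 y
    _ = lam (x * decompose 𝒜 y g⁻¹) := by
        rw [map_mul_eq_decompose_mul hdeg (decompose 𝒜 y g⁻¹).2 x, inv_inv]
    _ = 0 := LinearMap.congr_fun hx _

end Graded

theorem IsGradedSymmetric.exists_trace {k A G : Type*} [Field k] [Ring A] [Algebra k A]
    [Group G] {𝒜 : G → Submodule k A} (h : IsGradedSymmetric 𝒜) :
    ∃ lam : A →ₗ[k] k,
      (∀ x y : A, lam (x * y) = lam (y * x)) ∧
      (∀ I : Submodule k A, (∀ a : A, ∀ x ∈ I, a * x ∈ I) → I ≤ LinearMap.ker lam → I = ⊥) ∧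
      (∀ σ τ : G, σ * τ ≠ 1 → ∀ x ∈ 𝒜 σ, ∀ y ∈ 𝒜 τ, lam (x * y) = 0) := by
  obtain ⟨φ, hleft, hright, hgraded⟩ := h
  have hφ : (φ : A →ₗ[k] Module.Dual k A) = frobeniusPairing (φ 1) := eq_frobeniusPairing hright
  have happly (x y : A) : φ 1 (x * y) = φ x y := by
    rw [← frobeniusPairing_apply, ← hφ, LinearEquiv.coe_coe]
  have hcomm (x y : A) : φ 1 (x * y) = φ 1 (y * x) := by
    rw [happly, ← hleft x 1 y, mul_one]
  refine ⟨φ 1, hcomm, fun I hI hIlam => ?_, fun σ τ hστ x hx y hy => ?_⟩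
  · have hker : LinearMap.ker (frobeniusPairing (φ 1)) = ⊥ := by
      rw [← hφ, LinearEquiv.ker]
    exact eq_bot_iff.mpr (hker ▸ le_ker_frobeniusPairing hcomm hI hIlam)
  · rw [happly]
    exact hgraded σ x hx τ (fun e => hστ (e ▸ mul_inv_cancel σ)) y hy

theorem isGradedSymmetric_of_trace {k A G : Type*} [Field k] [Ring A] [Algebra k A]
    [FiniteDimensional k A] [Group G] [DecidableEq G] {𝒜 : G → Submodule k A}
    [Decomposition 𝒜] {lam : A →ₗ[k] k}
    (hcomm : ∀ x y : A, lam (x * y) = lam (y * x))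
    (hker : ∀ I : Submodule k A, (∀ a : A, ∀ x ∈ I, a * x ∈ I) →
      (I = ⨆ g : G, I ⊓ 𝒜 g) → I ≤ LinearMap.ker lam → I = ⊥)
    (hdeg : ∀ σ τ : G, σ * τ ≠ 1 → ∀ x ∈ 𝒜 σ, ∀ y ∈ 𝒜 τ, lam (x * y) = 0) :
    IsGradedSymmetric 𝒜 := by
  have hinj : Function.Injective (frobeniusPairing lam) := by
    rw [← LinearMap.ker_eq_bot]
    exact hker _ (fun a _ => mul_mem_ker_frobeniusPairing hcomm a)
      (Submodule.eq_iSup_inf_of_isHomogeneous (isHomogeneous_ker_frobeniusPairing hdeg))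
      ker_frobeniusPairing_le
  let φ := (frobeniusPairing lam).linearEquivOfInjective hinj Subspace.dual_finrank_eq.symm
  exact ⟨φ, frobeniusPairing_mul_left hcomm, frobeniusPairing_mul_right,
    fun _ _ hx => frobeniusPairing_mem_dualComponent hdeg hx⟩

theorem gradedSymmetric_iff_trace_general
    {k A : Type*} [Field k] [Ring A] [Algebra k A] [FiniteDimensional k A]
    {G : Type*} [Group G] [DecidableEq G]
    (𝒜 : G → Submodule k A)
    (hinternal : DirectSum.IsInternal 𝒜) :
    IsGradedSymmetric 𝒜 ↔
      ∃ lam : A →ₗ[k] k,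
        (∀ x y : A, lam (x * y) = lam (y * x)) ∧
        (∀ I : Submodule k A,
          (∀ a : A, ∀ x ∈ I, a * x ∈ I) →
          (I = ⨆ g : G, I ⊓ 𝒜 g) →
          I ≤ LinearMap.ker lam → I = ⊥) ∧
        (∀ σ τ : G, σ * τ ≠ 1 → ∀ x ∈ 𝒜 σ, ∀ y ∈ 𝒜 τ, lam (x * y) = 0) := by
  refine ⟨fun h => ?_, fun ⟨_, hcomm, hker, hdeg⟩ => ?_⟩
  · obtain ⟨lam, hcomm, hker, hdeg⟩ := h.exists_trace
    exact ⟨lam, hcomm, fun I hI _ hIlam => hker I hI hIlam, hdeg⟩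
  · let := hinternal.chooseDecomposition
    exact isGradedSymmetric_of_trace hcomm hker hdeg

/-- a finite dimensional `G`-graded algebra `A` is graded symmetric iff
there is a linear map `λ : A → k` with `λ(xy) = λ(yx)` for all `x, y`, whose kernel
contains no nonzero graded left ideal of `A`, and with `λ(x_σ y_τ) = 0` for all
homogeneous `x_σ ∈ A_σ`, `y_τ ∈ A_τ` with `στ ≠ e`. -/
theorem gradedSymmetric_iff_trace
    {k A : Type*} [Field k] [Ring A] [Algebra k A] [FiniteDimensional k A]
    {G : Type*} [Group G] [DecidableEq G]
    (𝒜 : G → Submodule k A)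
    (hinternal : DirectSum.IsInternal 𝒜)
    (hone : (1 : A) ∈ 𝒜 1)
    (hmul : ∀ {g h : G}, ∀ a ∈ 𝒜 g, ∀ b ∈ 𝒜 h, a * b ∈ 𝒜 (g * h)) :
    IsGradedSymmetric 𝒜 ↔
      ∃ lam : A →ₗ[k] k,
        (∀ x y : A, lam (x * y) = lam (y * x)) ∧
        (∀ I : Submodule k A,
          (∀ a : A, ∀ x ∈ I, a * x ∈ I) →
          (I = ⨆ g : G, I ⊓ 𝒜 g) →
          I ≤ LinearMap.ker lam → I = ⊥) ∧
        (∀ σ τ : G, σ * τ ≠ 1 → ∀ x ∈ 𝒜 σ, ∀ y ∈ 𝒜 τ, lam (x * y) = 0) :=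
  gradedSymmetric_iff_trace_general 𝒜 hinternal
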